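/- E₀^ω Borel reduces to E_S(E₀) via the map f : (2^ω)^ω → (2^ω)^ℤ defined by f(x)(n) = x(n) for n ≥ 0, f(x)(-1) = the constant-1 sequence, and f(x)(n) = the constant-0 sequence for n < -1. That is, x E₀^ω y iff f(x) E_S(E₀) f(y). -/
import Mathlib


/-- `E₀`: eventual equality of infinite binary sequences. -/
def E0 (x y : ℕ → Fin 2) : Prop := ∃ n, ∀ m > n, x m = y m

/-- `E₀^ω` on `(2^ω)^ω`: `E₀`-equivalent in every coordinate. -/
def E0pow (x y : ℕ → ℕ → Fin 2) : Prop := ∀ n, E0 (x n) (y n)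

/-- `E_S(E₀)` on `(2^ω)^ℤ`: some shift makes the sequences coordinatewise
`E₀`-equivalent. -/
def ESE0 (u v : ℤ → ℕ → Fin 2) : Prop := ∃ n : ℤ, ∀ k : ℤ, E0 (u (n + k)) (v k)

/-- The map sending `x` to the `ℤ`-sequence which is `x` on `ℕ`, the constant-1
sequence at `-1`, and the constant-0 sequence below `-1`. -/
noncomputable def padMap (x : ℕ → ℕ → Fin 2) : ℤ → ℕ → Fin 2 := fun n =>
  if 0 ≤ n then x n.toNat else if n = -1 then (fun _ => 1) else (fun _ => 0)

lemma E0_refl (x : ℕ → Fin 2) : E0 x x := ⟨0, fun _ _ => rfl⟩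

lemma not_E0_10 : ¬ E0 (fun _ => (1 : Fin 2)) (fun _ => 0) := by
  rintro ⟨n, h⟩
  have := h (n + 1) (Nat.lt_succ_self n); simp at this

lemma not_E0_01 : ¬ E0 (fun _ => (0 : Fin 2)) (fun _ => 1) := by
  rintro ⟨n, h⟩
  have := h (n + 1) (Nat.lt_succ_self n); simp at this

/-- `E₀^ω` Borel reduces to `E_S(E₀)` via `padMap`. -/
theorem E0pow_reducible_ESE0 :
    Measurable padMap ∧
    ∀ x y : ℕ → ℕ → Fin 2, E0pow x y ↔ ESE0 (padMap x) (padMap y) := by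
  constructor
  · apply measurable_pi_lambda
    intro n
    unfold padMap
    by_cases h : 0 ≤ n
    · simp only [h, if_true]
      exact measurable_pi_apply _
    · simp only [h, if_false]
      exact measurable_const
  · intro x y
    constructor
    · intro h
      refine ⟨0, fun k => ?_⟩
      rw [zero_add]
      unfold padMap
      by_cases hk : 0 ≤ k
      · simp only [hk, if_true]; exact h _
      · simp only [hk, if_false]
        by_cases hk1 : k = -1 <;> simp [hk1, E0_refl]
    · rintro ⟨n, h⟩
      have hn : n = 0 := by
        by_contra hn0
        rcases lt_or_gt_of_ne hn0 with hneg | hpos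
        · have := h (-1)
          have h1 : ¬ (0 ≤ n + -1) := by omega
          have h2 : ¬ (n + -1 = -1) := by omega
          unfold padMap at this
          simp only [h1, if_false, h2] at this
          norm_num at this
          exact not_E0_01 this
        · have := h (-1 - n)
          have h1 : ¬ (0 ≤ -1 - n) := by omega
          have h2 : ¬ (-1 - n = -1) := by omega
          have h3 : n + (-1 - n) = -1 := by ring
          unfold padMap at this
          rw [h3] at this
          simp only [h1, if_false, h2] at this
          norm_num at this
          exact not_E0_10 this
      subst hn
      intro m
      have := h (m : ℤ)
      unfold padMap at this
      simp only [zero_add] at this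
      have hm : (0 : ℤ) ≤ m := Int.natCast_nonneg m
      simp only [hm, if_true, Int.toNat_natCast] at this
      exact this
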